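/- For every τ in the complex upper half-plane ℍ with |τ| = 1, the modular lambda function satisfies Re(λ(τ)) = 1/2. -/

import Mathlib

open scoped Real

/-- The Jacobi theta function `θ₂`. -/
noncomputable def theta2 (τ : ℂ) : ℂ :=
  ∑' n : ℤ, Complex.exp (Real.pi * Complex.I * τ * ((n : ℂ) + 1 / 2) ^ 2)

/-- The Jacobi theta function `θ₃`. -/
noncomputable def theta3 (τ : ℂ) : ℂ :=
  ∑' n : ℤ, Complex.exp (Real.pi * Complex.I * τ * (n : ℂ) ^ 2)

/-- The modular lambda function. -/
noncomputable def modularLambda (τ : ℂ) : ℂ := theta2 τ ^ 4 / theta3 τ ^ 4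

/-!
If `‖τ‖ = 1` then `-conj τ = -1 / τ`. Conjugating a theta series replaces `τ` by `-conj τ`, so
`conj λ(τ) = λ(-1/τ)`. The transformation laws `θ₂(-1/τ) = √(-iτ) θ₄(τ)`,
`θ₃(-1/τ) = √(-iτ) θ₃(τ)` together with Jacobi's identity `θ₂⁴ + θ₄⁴ = θ₃⁴` give
`λ(-1/τ) = 1 - λ(τ)`, hence `λ + conj λ = 1`.

Jacobi's identity follows from the duplication formulas `θ₃(τ)² = θ₃(2τ)² + θ₂(2τ)²`,
`θ₄(τ)² = θ₃(2τ)² - θ₂(2τ)²`, `θ₂(τ)² = 2 θ₂(2τ) θ₃(2τ)`, all specialisations of one product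
formula for `jacobiTheta₂`, obtained by splitting the double series `∑ₙ ∑ₘ` according to the
parity of `n + m`. The same formulas give `θ₃(τ)² θ₄(τ)² = θ₄(2τ)⁴`, which propagates a zero of
`θ₃` towards `im τ = ∞`, where `θ₃ → 1`; so `θ₃` does not vanish on the upper half-plane.
-/

open Complex Function
open scoped ComplexConjugate

theorem Summable.tsum_int_prod_eq_tsum_even_add_tsum_odd {E : Type*} [NormedAddCommGroup E]
    [CompleteSpace E] {f : ℤ × ℤ → E} (hf : Summable f) :
    ∑' p, f p =
      ∑' p : ℤ × ℤ, f (p.1 + p.2, p.1 - p.2) + ∑' p : ℤ × ℤ, f (p.1 + p.2 + 1, p.1 - p.2) := by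
  set e : ℤ × ℤ → ℤ × ℤ := fun p => (p.1 + p.2, p.1 - p.2)
  set o : ℤ × ℤ → ℤ × ℤ := fun p => (p.1 + p.2 + 1, p.1 - p.2)
  have he : Injective e := fun p q h => by
    simp only [e, Prod.mk.injEq] at h; ext <;> omega
  have ho : Injective o := fun p q h => by
    simp only [o, Prod.mk.injEq] at h; ext <;> omega
  have hc : IsCompl (Set.range e) (Set.range o) := by
    constructor
    · rw [Set.disjoint_left]
      rintro _ ⟨p, rfl⟩ ⟨q, hq⟩
      simp only [e, o, Prod.mk.injEq] at hq
      omega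
    · refine codisjoint_iff.mpr (Set.eq_univ_of_forall ?_)
      rintro ⟨m, n⟩
      obtain ⟨k, hk | hk⟩ := Int.even_or_odd' (m + n)
      · exact Or.inl ⟨(k, m - k), by simp only [e, Prod.mk.injEq]; omega⟩
      · exact Or.inr ⟨(k, m - k - 1), by simp only [o, Prod.mk.injEq]; omega⟩
  exact ((he.hasSum_range_iff.mpr (hf.comp_injective he).hasSum).add_isCompl hc
    (ho.hasSum_range_iff.mpr (hf.comp_injective ho).hasSum)).tsum_eq

theorem jacobiTheta₂_mul_jacobiTheta₂ (z w τ : ℂ) :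
    jacobiTheta₂ z τ * jacobiTheta₂ w τ =
      jacobiTheta₂ (z + w) (2 * τ) * jacobiTheta₂ (z - w) (2 * τ) +
        cexp (π * I * (τ + 2 * z)) *
          (jacobiTheta₂ (z + w + τ) (2 * τ) * jacobiTheta₂ (z - w + τ) (2 * τ)) := by
  have him : (2 * τ).im = 2 * τ.im := by simp
  rcases le_or_gt τ.im 0 with hτ | hτ
  · have h2τ : (2 * τ).im ≤ 0 := by linarith
    simp [jacobiTheta₂_undef _ hτ, jacobiTheta₂_undef _ h2τ]
  have h2τ : 0 < (2 * τ).im := by linarith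
  have summ (u σ : ℂ) (hσ : 0 < σ.im) : Summable fun n => ‖jacobiTheta₂_term n u σ‖ :=
    ((summable_jacobiTheta₂_term_iff u σ).mpr hσ).norm
  have h_even (p q : ℤ) : jacobiTheta₂_term (p + q) z τ * jacobiTheta₂_term (p - q) w τ =
      jacobiTheta₂_term p (z + w) (2 * τ) * jacobiTheta₂_term q (z - w) (2 * τ) := by
    simp only [jacobiTheta₂_term, ← Complex.exp_add]
    congr 1
    push_cast
    ring
  have h_odd (p q : ℤ) : jacobiTheta₂_term (p + q + 1) z τ * jacobiTheta₂_term (p - q) w τ =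
      cexp (π * I * (τ + 2 * z)) *
        (jacobiTheta₂_term p (z + w + τ) (2 * τ) * jacobiTheta₂_term q (z - w + τ) (2 * τ)) := by
    simp only [jacobiTheta₂_term, ← Complex.exp_add]
    congr 1
    push_cast
    ring
  simp only [jacobiTheta₂]
  rw [tsum_mul_tsum_of_summable_norm (summ z τ hτ) (summ w τ hτ),
    (summable_mul_of_summable_norm (summ z τ hτ)
      (summ w τ hτ)).tsum_int_prod_eq_tsum_even_add_tsum_odd]
  simp only [h_even, h_odd, tsum_mul_left]
  rw [tsum_mul_tsum_of_summable_norm (summ _ _ h2τ) (summ _ _ h2τ),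
    tsum_mul_tsum_of_summable_norm (summ _ _ h2τ) (summ _ _ h2τ)]

/-- `θ₄(τ) = ∑ₙ (-1)ⁿ exp(πiτn²)`. -/
noncomputable def theta4 (τ : ℂ) : ℂ := jacobiTheta₂ (1 / 2) τ

theorem theta3_eq_jacobiTheta₂ (τ : ℂ) : theta3 τ = jacobiTheta₂ 0 τ :=
  tsum_congr fun n => by simp only [jacobiTheta₂_term]; ring_nf

theorem theta3_eq_jacobiTheta (τ : ℂ) : theta3 τ = jacobiTheta τ := by
  rw [theta3_eq_jacobiTheta₂, jacobiTheta_eq_jacobiTheta₂]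

theorem theta2_eq_jacobiTheta₂ (τ : ℂ) :
    theta2 τ = cexp (π * I * τ / 4) * jacobiTheta₂ (τ / 2) τ := by
  rw [jacobiTheta₂, ← tsum_mul_left]
  refine tsum_congr fun n => ?_
  rw [jacobiTheta₂_term, ← Complex.exp_add]
  ring_nf

theorem theta4_eq_jacobiTheta_add_one (τ : ℂ) : theta4 τ = jacobiTheta (τ + 1) := by
  rw [theta4, jacobiTheta_eq_jacobiTheta₂]
  refine tsum_congr fun n => ?_
  obtain ⟨k, hk⟩ := Int.even_mul_pred_self n
  have hsq : n ^ 2 = n + 2 * k := by linear_combination hk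
  replace hsq : (n : ℂ) ^ 2 = n + 2 * k := by exact_mod_cast hsq
  refine Complex.exp_eq_exp_iff_exists_int.mpr ⟨-k, ?_⟩
  push_cast
  linear_combination (-(π * I)) * hsq

theorem theta2_two_mul_sq (τ : ℂ) :
    theta2 (2 * τ) ^ 2 = cexp (π * I * τ) * jacobiTheta₂ τ (2 * τ) ^ 2 := by
  rw [theta2_eq_jacobiTheta₂, mul_pow, ← Complex.exp_nat_mul, mul_div_cancel_left₀ τ two_ne_zero]
  ring_nf

theorem theta3_sq_eq (τ : ℂ) : theta3 τ ^ 2 = theta3 (2 * τ) ^ 2 + theta2 (2 * τ) ^ 2 := by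
  rw [theta2_two_mul_sq, theta3_eq_jacobiTheta₂, theta3_eq_jacobiTheta₂, sq,
    jacobiTheta₂_mul_jacobiTheta₂]
  ring_nf

theorem theta4_sq_eq (τ : ℂ) : theta4 τ ^ 2 = theta3 (2 * τ) ^ 2 - theta2 (2 * τ) ^ 2 := by
  have h0 : jacobiTheta₂ 1 (2 * τ) = jacobiTheta₂ 0 (2 * τ) := by
    simpa using jacobiTheta₂_add_left 0 (2 * τ)
  have h1 : jacobiTheta₂ (1 + τ) (2 * τ) = jacobiTheta₂ τ (2 * τ) := by
    rw [add_comm, jacobiTheta₂_add_left]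
  have h2 : cexp (π * I * (τ + 2 * (1 / 2))) = -cexp (π * I * τ) := by
    rw [mul_add, Complex.exp_add]; simp
  rw [theta2_two_mul_sq, theta3_eq_jacobiTheta₂, theta4, sq, jacobiTheta₂_mul_jacobiTheta₂,
    sub_self, zero_add, add_halves, h2, h0, h1]
  ring

theorem theta2_sq_eq (τ : ℂ) : theta2 τ ^ 2 = 2 * theta2 (2 * τ) * theta3 (2 * τ) := by
  have hexp : cexp (π * I * (τ + 2 * (τ / 2))) * cexp (-π * I * (2 * τ + 2 * 0)) = 1 := by
    rw [← Complex.exp_add]; ring_nf; exact Complex.exp_zero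
  have h : jacobiTheta₂ (τ / 2) τ ^ 2 = 2 * jacobiTheta₂ τ (2 * τ) * jacobiTheta₂ 0 (2 * τ) := by
    rw [sq, jacobiTheta₂_mul_jacobiTheta₂, sub_self, zero_add, add_halves,
      show τ + τ = 0 + 2 * τ by ring, jacobiTheta₂_add_left']
    linear_combination (jacobiTheta₂ 0 (2 * τ) * jacobiTheta₂ τ (2 * τ)) * hexp
  rw [theta2_eq_jacobiTheta₂, theta2_eq_jacobiTheta₂, theta3_eq_jacobiTheta₂, mul_pow, h,
    mul_div_cancel_left₀ τ two_ne_zero, ← Complex.exp_nat_mul]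
  ring_nf

theorem theta2_pow_four_add_theta4_pow_four (τ : ℂ) :
    theta2 τ ^ 4 + theta4 τ ^ 4 = theta3 τ ^ 4 := by
  linear_combination (theta2 τ ^ 2 + 2 * theta2 (2 * τ) * theta3 (2 * τ)) * theta2_sq_eq τ +
    (theta4 τ ^ 2 + theta3 (2 * τ) ^ 2 - theta2 (2 * τ) ^ 2) * theta4_sq_eq τ -
    (theta3 τ ^ 2 + theta3 (2 * τ) ^ 2 + theta2 (2 * τ) ^ 2) * theta3_sq_eq τ

theorem theta3_sq_mul_theta4_sq (τ : ℂ) :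
    theta3 τ ^ 2 * theta4 τ ^ 2 = theta4 (2 * τ) ^ 4 := by
  linear_combination (theta4 τ ^ 2) * theta3_sq_eq τ +
    (theta3 (2 * τ) ^ 2 + theta2 (2 * τ) ^ 2) * theta4_sq_eq τ -
    theta2_pow_four_add_theta4_pow_four (2 * τ)

theorem jacobiTheta_ne_zero_of_one_le_im {τ : ℂ} (hτ : 1 ≤ τ.im) : jacobiTheta τ ≠ 0 := by
  set x := Real.exp (-π * τ.im)
  have hx : x < 1 / 3 := by
    calc x ≤ Real.exp (-π) := Real.exp_le_exp.mpr (by nlinarith [Real.pi_pos])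
      _ = (Real.exp π)⁻¹ := Real.exp_neg π
      _ < 1 / 3 := by
        rw [one_div]
        exact inv_strictAnti₀ (by norm_num) (by linarith [Real.add_one_le_exp π, Real.pi_gt_three])
  intro h
  have := norm_jacobiTheta_sub_one_le (one_pos.trans_le hτ)
  rw [h, zero_sub, norm_neg, norm_one, div_mul_eq_mul_div, le_div_iff₀ (by linarith)] at this
  linarith

theorem jacobiTheta_ne_zero {τ : ℂ} (hτ : 0 < τ.im) : jacobiTheta τ ≠ 0 := by
  suffices ∀ n : ℕ, ∀ σ : ℂ, 1 ≤ 2 ^ n * σ.im → jacobiTheta σ ≠ 0 by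
    obtain ⟨n, hn⟩ := pow_unbounded_of_one_lt τ.im⁻¹ one_lt_two
    exact this n τ ((inv_lt_iff_one_lt_mul₀ hτ).mp hn).le
  -- `σ ↦ 2σ + 1` doubles `im σ` and, since `θ₄(2σ) = θ₃(2σ + 1)`, maps zeros of `θ₃` to zeros.
  intro n
  induction n with
  | zero => simpa using fun σ => jacobiTheta_ne_zero_of_one_le_im
  | succ n ih =>
    intro σ hσ h0
    have h := theta3_sq_mul_theta4_sq σ
    rw [theta3_eq_jacobiTheta, h0, theta4_eq_jacobiTheta_add_one (2 * σ)] at h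
    refine ih (2 * σ + 1) ?_ (pow_eq_zero_iff four_ne_zero |>.mp (by simpa using h.symm))
    simpa [pow_succ, mul_assoc] using hσ

theorem theta3_ne_zero {τ : ℂ} (hτ : 0 < τ.im) : theta3 τ ≠ 0 :=
  theta3_eq_jacobiTheta τ ▸ jacobiTheta_ne_zero hτ

theorem cpow_half_neg_I_mul_ne_zero {τ : ℂ} (hτ : τ ≠ 0) : (-I * τ) ^ (1 / 2 : ℂ) ≠ 0 := by
  simp [Complex.cpow_eq_zero_iff, hτ]

theorem theta3_neg_inv {τ : ℂ} (hτ : τ ≠ 0) :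
    theta3 (-1 / τ) = (-I * τ) ^ (1 / 2 : ℂ) * theta3 τ := by
  rw [theta3_eq_jacobiTheta₂, theta3_eq_jacobiTheta₂, jacobiTheta₂_functional_equation 0 τ]
  field_simp [cpow_half_neg_I_mul_ne_zero hτ]
  simp

theorem theta2_neg_inv {τ : ℂ} (hτ : τ ≠ 0) :
    theta2 (-1 / τ) = (-I * τ) ^ (1 / 2 : ℂ) * theta4 τ := by
  have hz : -1 / τ / 2 = -(1 / 2 / τ) := by ring
  have hexp : π * I * (-1 / τ) / 4 = -π * I * (1 / 2) ^ 2 / τ := by ring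
  rw [theta2_eq_jacobiTheta₂, theta4, jacobiTheta₂_functional_equation (1 / 2) τ, hz,
    jacobiTheta₂_neg_left, hexp]
  field_simp [cpow_half_neg_I_mul_ne_zero hτ]

theorem modularLambda_neg_inv {τ : ℂ} (hτ : 0 < τ.im) :
    modularLambda (-1 / τ) = 1 - modularLambda τ := by
  have hτ0 : τ ≠ 0 := fun h => by simp [h] at hτ
  have h3 : theta3 τ ^ 4 ≠ 0 := pow_ne_zero 4 (theta3_ne_zero hτ)
  rw [modularLambda, modularLambda, theta2_neg_inv hτ0, theta3_neg_inv hτ0, mul_pow, mul_pow,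
    mul_div_mul_left _ _ (pow_ne_zero 4 (cpow_half_neg_I_mul_ne_zero hτ0)), eq_sub_iff_add_eq,
    ← add_div, add_comm, theta2_pow_four_add_theta4_pow_four, div_self h3]

theorem theta3_conj (τ : ℂ) : conj (theta3 τ) = theta3 (-conj τ) := by
  rw [theta3_eq_jacobiTheta₂, theta3_eq_jacobiTheta₂, jacobiTheta₂_conj, map_zero]

theorem theta2_conj (τ : ℂ) : conj (theta2 τ) = theta2 (-conj τ) := by
  rw [theta2_eq_jacobiTheta₂, theta2_eq_jacobiTheta₂, map_mul, ← Complex.exp_conj,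
    jacobiTheta₂_conj, ← jacobiTheta₂_neg_left]
  simp only [map_div₀, map_mul, conj_ofReal, conj_I, map_ofNat]
  ring_nf

theorem modularLambda_conj (τ : ℂ) : conj (modularLambda τ) = modularLambda (-conj τ) := by
  rw [modularLambda, modularLambda, map_div₀, map_pow, map_pow, theta2_conj, theta3_conj]

theorem stmt10 (τ : ℂ) (hτ : 0 < τ.im) (habs : ‖τ‖ = 1) :
    (modularLambda τ).re = 1 / 2 := by
  have hinv : -conj τ = -1 / τ := by rw [← Complex.inv_eq_conj habs, neg_div, one_div]
  have h : conj (modularLambda τ) = 1 - modularLambda τ := by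
    rw [modularLambda_conj, hinv, modularLambda_neg_inv hτ]
  have hre := congrArg Complex.re h
  rw [Complex.conj_re, Complex.sub_re, Complex.one_re] at hre
  linarith
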